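/- arXiv:1802.08214 — 6 statements merged into one kernel-verified Lean document; each statement's English description precedes it below -/
import Mathlib

section
/- The Hamiltonian H_BT is positive semidefinite, and its smallest eigenvalue is 0 if the bounded tiling instance (Γ, T, γ) admits a valid tiling and is at least 1 otherwise. -/
open ComplexOrder

/-- A tile over the colour set `Fin k`: a 4-tuple of colours `(u, d, l, r)`. -/
abbrev Tile (k : ℕ) := Fin k × Fin k × Fin k × Fin k

namespace Tile
def u {k : ℕ} (w : Tile k) : Fin k := w.1
def d {k : ℕ} (w : Tile k) : Fin k := w.2.1
def l {k : ℕ} (w : Tile k) : Fin k := w.2.2.1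
def r {k : ℕ} (w : Tile k) : Fin k := w.2.2.2
end Tile

/-- A boundary condition on the `m × n` grid: a colour for each boundary edge. -/
structure BC (k m n : ℕ) where
  top : Fin n → Fin k
  bot : Fin n → Fin k
  left : Fin m → Fin k
  right : Fin m → Fin k

/-- A configuration assigns a 4-tuple of colours to each plaquette of the `m × n` grid
(first index: the row, increasing downwards; second index: the column). -/
abbrev Config (k m n : ℕ) := Fin m × Fin n → Tile k

/-- A configuration is a valid tiling for `(T, γ)`: every plaquette carries a tile of `T`,
adjacent plaquettes agree on the shared edge, and boundary edges carry the prescribed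
colours. -/
def IsValidTiling {k m n : ℕ} (T : Finset (Tile k)) (γ : BC k m n)
    (c : Config k m n) : Prop :=
  (∀ p, c p ∈ T) ∧
  (∀ (i : Fin m) (j : Fin n) (h : (j : ℕ) + 1 < n),
    (c (i, j)).r = (c (i, ⟨(j : ℕ) + 1, h⟩)).l) ∧
  (∀ (i : Fin m) (j : Fin n) (h : (i : ℕ) + 1 < m),
    (c (i, j)).d = (c (⟨(i : ℕ) + 1, h⟩, j)).u) ∧
  (∀ (hm : 0 < m) (j : Fin n), (c (⟨0, hm⟩, j)).u = γ.top j) ∧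
  (∀ (hm : 0 < m) (j : Fin n), (c (⟨m - 1, by omega⟩, j)).d = γ.bot j) ∧
  (∀ (hn : 0 < n) (i : Fin m), (c (i, ⟨0, hn⟩)).l = γ.left i) ∧
  (∀ (hn : 0 < n) (i : Fin m), (c (i, ⟨n - 1, by omega⟩)).r = γ.right i)

/-- The energy of a configuration: the number of violated constraints.  There is one
constraint for each pair of adjacent plaquettes (both tiles belong to `T` and match on the
shared edge) and one constraint for each boundary plaquette and boundary edge of it
(the tile belongs to `T` and shows the prescribed colour on that boundary edge). -/
def energy {k m n : ℕ} (T : Finset (Tile k)) (γ : BC k m n) (c : Config k m n) : ℕ :=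
  -- horizontally adjacent pairs
  (∑ i : Fin m, ∑ j : Fin n,
    if h : (j : ℕ) + 1 < n then
      (if c (i, j) ∈ T ∧ c (i, ⟨(j : ℕ) + 1, h⟩) ∈ T ∧
          (c (i, j)).r = (c (i, ⟨(j : ℕ) + 1, h⟩)).l then 0 else 1)
    else 0) +
  -- vertically adjacent pairs
  (∑ i : Fin m, ∑ j : Fin n,
    if h : (i : ℕ) + 1 < m then
      (if c (i, j) ∈ T ∧ c (⟨(i : ℕ) + 1, h⟩, j) ∈ T ∧
          (c (i, j)).d = (c (⟨(i : ℕ) + 1, h⟩, j)).u then 0 else 1)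
    else 0) +
  -- top and bottom boundary constraints
  (if hm : 0 < m then
    (∑ j : Fin n, if c (⟨0, hm⟩, j) ∈ T ∧ (c (⟨0, hm⟩, j)).u = γ.top j then 0 else 1) +
    (∑ j : Fin n, if c (⟨m - 1, by omega⟩, j) ∈ T ∧
        (c (⟨m - 1, by omega⟩, j)).d = γ.bot j then 0 else 1)
  else 0) +
  -- left and right boundary constraints
  (if hn : 0 < n then
    (∑ i : Fin m, if c (i, ⟨0, hn⟩) ∈ T ∧ (c (i, ⟨0, hn⟩)).l = γ.left i then 0 else 1) +
    (∑ i : Fin m, if c (i, ⟨n - 1, by omega⟩) ∈ T ∧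
        (c (i, ⟨n - 1, by omega⟩)).r = γ.right i then 0 else 1)
  else 0)


/-- The Hamiltonian `H_BT`: the diagonal operator on `ℂ^{(Γ⁴)^{m·n}}` (the Hilbert space with
orthonormal basis indexed by configurations) whose diagonal entry at the basis vector indexed
by a configuration `c` is the energy `E(c)`. -/
noncomputable def Hbt {k m n : ℕ} (T : Finset (Tile k)) (γ : BC k m n) :
    Matrix (Config k m n) (Config k m n) ℂ :=
  Matrix.diagonal fun c => (energy T γ c : ℂ)


private lemma ite01_eq_zero_iff {P : Prop} [Decidable P] : (if P then (0:ℕ) else 1) = 0 ↔ P := by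
  split <;> simp_all

lemma energy_eq_zero_iff {k m n : ℕ} (T : Finset (Tile k)) (γ : BC k m n)
    (c : Config k m n) : energy T γ c = 0 ↔ IsValidTiling T γ c := by
  constructor
  · intro h
    rw [energy] at h
    obtain ⟨h3, hD⟩ := Nat.add_eq_zero.mp h
    obtain ⟨h2, hC⟩ := Nat.add_eq_zero.mp h3
    obtain ⟨hA, hB⟩ := Nat.add_eq_zero.mp h2
    have hA' : ∀ (i : Fin m) (j : Fin n) (hj : (j : ℕ) + 1 < n),
        c (i, j) ∈ T ∧ c (i, ⟨(j : ℕ) + 1, hj⟩) ∈ T ∧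
          (c (i, j)).r = (c (i, ⟨(j : ℕ) + 1, hj⟩)).l := by
      intro i j hj
      have := Finset.sum_eq_zero_iff.mp
        (Finset.sum_eq_zero_iff.mp hA i (Finset.mem_univ i)) j (Finset.mem_univ j)
      rw [dif_pos hj] at this
      exact ite01_eq_zero_iff.mp this
    have hB' : ∀ (i : Fin m) (j : Fin n) (hi : (i : ℕ) + 1 < m),
        c (i, j) ∈ T ∧ c (⟨(i : ℕ) + 1, hi⟩, j) ∈ T ∧
          (c (i, j)).d = (c (⟨(i : ℕ) + 1, hi⟩, j)).u := by
      intro i j hi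
      have := Finset.sum_eq_zero_iff.mp
        (Finset.sum_eq_zero_iff.mp hB i (Finset.mem_univ i)) j (Finset.mem_univ j)
      rw [dif_pos hi] at this
      exact ite01_eq_zero_iff.mp this
    have hC' : ∀ (hm : 0 < m) (j : Fin n),
        (c (⟨0, hm⟩, j) ∈ T ∧ (c (⟨0, hm⟩, j)).u = γ.top j) ∧
        (c (⟨m - 1, by omega⟩, j) ∈ T ∧ (c (⟨m - 1, by omega⟩, j)).d = γ.bot j) := by
      intro hm j
      rw [dif_pos hm] at hC
      obtain ⟨hC1, hC2⟩ := Nat.add_eq_zero.mp hC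
      exact ⟨ite01_eq_zero_iff.mp (Finset.sum_eq_zero_iff.mp hC1 j (Finset.mem_univ j)),
        ite01_eq_zero_iff.mp (Finset.sum_eq_zero_iff.mp hC2 j (Finset.mem_univ j))⟩
    have hD' : ∀ (hn : 0 < n) (i : Fin m),
        (c (i, ⟨0, hn⟩) ∈ T ∧ (c (i, ⟨0, hn⟩)).l = γ.left i) ∧
        (c (i, ⟨n - 1, by omega⟩) ∈ T ∧ (c (i, ⟨n - 1, by omega⟩)).r = γ.right i) := by
      intro hn i
      rw [dif_pos hn] at hD
      obtain ⟨hD1, hD2⟩ := Nat.add_eq_zero.mp hD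
      exact ⟨ite01_eq_zero_iff.mp (Finset.sum_eq_zero_iff.mp hD1 i (Finset.mem_univ i)),
        ite01_eq_zero_iff.mp (Finset.sum_eq_zero_iff.mp hD2 i (Finset.mem_univ i))⟩
    refine ⟨?_, fun i j hj => (hA' i j hj).2.2, fun i j hi => (hB' i j hi).2.2,
      fun hm j => ((hC' hm j).1).2, fun hm j => ((hC' hm j).2).2,
      fun hn i => ((hD' hn i).1).2, fun hn i => ((hD' hn i).2).2⟩
    rintro ⟨i, j⟩
    have hn : 0 < n := j.pos
    by_cases hj : (j : ℕ) + 1 < n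
    · exact (hA' i j hj).1
    · have hj' : j = ⟨n - 1, by omega⟩ := Fin.ext (by have := j.isLt; simp; omega)
      rw [hj']
      exact ((hD' hn i).2).1
  · rintro ⟨hT, hhor, hver, htop, hbot, hleft, hright⟩
    rw [energy]
    refine Nat.add_eq_zero.mpr ⟨Nat.add_eq_zero.mpr ⟨Nat.add_eq_zero.mpr ⟨?_, ?_⟩, ?_⟩, ?_⟩
    · refine Finset.sum_eq_zero fun i _ => Finset.sum_eq_zero fun j _ => ?_
      split_ifs with h1 h2
      · rfl
      · exact absurd ⟨hT _, hT _, hhor i j h1⟩ h2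
      · rfl
    · refine Finset.sum_eq_zero fun i _ => Finset.sum_eq_zero fun j _ => ?_
      split_ifs with h1 h2
      · rfl
      · exact absurd ⟨hT _, hT _, hver i j h1⟩ h2
      · rfl
    · split_ifs with hm
      · rw [Finset.sum_eq_zero fun j _ => if_pos ⟨hT _, htop hm j⟩,
          Finset.sum_eq_zero fun j _ => if_pos ⟨hT _, hbot hm j⟩]
        rfl
      · rfl
    · split_ifs with hn
      · rw [Finset.sum_eq_zero fun i _ => if_pos ⟨hT _, hleft hn i⟩,
          Finset.sum_eq_zero fun i _ => if_pos ⟨hT _, hright hn i⟩]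
        rfl
      · rfl

set_option maxHeartbeats 2000000 in
private lemma Hbt_aux (k m n : ℕ) (T : Finset (Tile k))
    (γ : BC k m n) (hH : (Hbt T γ).IsHermitian) :
    (Hbt T γ).PosSemidef ∧
    ((∃ c : Config k m n, IsValidTiling T γ c) →
      (∃ c, hH.eigenvalues c = 0) ∧ ∀ c, 0 ≤ hH.eigenvalues c) ∧
    ((¬ ∃ c : Config k m n, IsValidTiling T γ c) → ∀ c, 1 ≤ hH.eigenvalues c) := by
  have hpsd : (Hbt T γ).PosSemidef := by
    refine Matrix.posSemidef_diagonal_iff.mpr fun c => ?_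
    exact_mod_cast Complex.zero_le_real.mpr (Nat.cast_nonneg _)
  have hrange : ∀ i : Config k m n, ∃ c, (energy T γ c : ℝ) = hH.eigenvalues i := by
    intro i
    have h1 : ((hH.eigenvalues i : ℝ) : ℂ) ∈ spectrum ℂ (Hbt T γ) := by
      simpa using spectrum.algebraMap_mem ℂ (hH.eigenvalues_mem_spectrum_real i)
    unfold Hbt at h1
    rw [spectrum_diagonal] at h1
    obtain ⟨c, hc⟩ := h1
    have hc' : ((energy T γ c : ℕ) : ℂ) = ((hH.eigenvalues i : ℝ) : ℂ) := hc
    exact ⟨c, by exact_mod_cast hc'⟩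
  refine ⟨hpsd, ?_, ?_⟩
  · rintro ⟨c0, hc0⟩
    refine ⟨?_, fun i => hpsd.eigenvalues_nonneg i⟩
    have hdet : (Hbt T γ).det = 0 := by
      rw [Hbt, Matrix.det_diagonal]
      refine Finset.prod_eq_zero (Finset.mem_univ c0) ?_
      rw [(energy_eq_zero_iff T γ c0).mpr hc0]
      simp
    rw [hH.det_eq_prod_eigenvalues] at hdet
    obtain ⟨i, -, hi⟩ := Finset.prod_eq_zero_iff.mp hdet
    exact ⟨i, by simpa using hi⟩
  · intro hno i
    obtain ⟨c, hc⟩ := hrange i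
    have : energy T γ c ≠ 0 := fun h0 => hno ⟨c, (energy_eq_zero_iff T γ c).mp h0⟩
    have : 1 ≤ energy T γ c := Nat.one_le_iff_ne_zero.mpr this
    rw [← hc]
    exact_mod_cast this

/-- `H_BT` is positive semidefinite, and its smallest eigenvalue is `0` if the bounded tiling
instance `(Γ, T, γ)` admits a valid tiling, and is at least `1` otherwise. -/
theorem Hbt_posSemidef_and_smallest_eigenvalue (k m n : ℕ) (T : Finset (Tile k))
    (γ : BC k m n) (hH : (Hbt T γ).IsHermitian) :
    (Hbt T γ).PosSemidef ∧
    ((∃ c : Config k m n, IsValidTiling T γ c) →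
      (∃ c, hH.eigenvalues c = 0) ∧ ∀ c, 0 ≤ hH.eigenvalues c) ∧
    ((¬ ∃ c : Config k m n, IsValidTiling T γ c) → ∀ c, 1 ≤ hH.eigenvalues c) := Hbt_aux k m n T γ hH
end

section
/- For every physical configuration s : plaquettes → Γ⁴, the coefficient of the PEPS state Φ_BT at the basis vector indexed by s equals 1 if s is a valid tiling for (T, γ) and equals 0 otherwise. -/
/-- The entry of the PEPS tensor `A_T` with virtual indices `w = (u,d,l,r)` and physical
index `s`: it is `1` if `w ∈ T` and `s = w`, and `0` otherwise. -/
noncomputable def ATentry {k : ℕ} (T : Finset (Tile k)) (w s : Tile k) : ℂ :=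
  if w ∈ T ∧ s = w then 1 else 0

/-- The 4-tuple of colours on the edges of the plaquette `p`, determined by the boundary
condition `γ` on boundary edges, and by the assignments `eH` (interior edges shared by
horizontally adjacent plaquettes) and `eV` (interior edges shared by vertically adjacent
plaquettes) on interior edges. -/
def plaqColours {k m n : ℕ} (γ : BC k m n)
    (eH : Fin m × Fin (n - 1) → Fin k) (eV : Fin (m - 1) × Fin n → Fin k)
    (p : Fin m × Fin n) : Tile k :=
  ( if _h : (p.1 : ℕ) = 0 then γ.top p.2
      else eV (⟨(p.1 : ℕ) - 1, by have := p.1.isLt; omega⟩, p.2),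
    if _h : (p.1 : ℕ) = m - 1 then γ.bot p.2
      else eV (⟨(p.1 : ℕ), by have := p.1.isLt; omega⟩, p.2),
    if _h : (p.2 : ℕ) = 0 then γ.left p.1
      else eH (p.1, ⟨(p.2 : ℕ) - 1, by have := p.2.isLt; omega⟩),
    if _h : (p.2 : ℕ) = n - 1 then γ.right p.1
      else eH (p.1, ⟨(p.2 : ℕ), by have := p.2.isLt; omega⟩) )

/-- The coefficient of the PEPS state `Φ_BT` at the physical basis vector indexed by
`s : plaquettes → Γ⁴`: the sum over all assignments of a colour to every interior edge
(boundary edges being fixed by `γ`) of the product over all plaquettes of the corresponding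
entry of the tensor `A_T`. -/
noncomputable def pepsCoeff {k m n : ℕ} (T : Finset (Tile k)) (γ : BC k m n)
    (s : Config k m n) : ℂ :=
  ∑ eH : Fin m × Fin (n - 1) → Fin k, ∑ eV : Fin (m - 1) × Fin n → Fin k,
    ∏ p : Fin m × Fin n, ATentry T (plaqColours γ eH eV p) (s p)

/-- The horizontal interior-edge colours determined by a configuration. -/
def eH0 {k m n : ℕ} (s : Config k m n) : Fin m × Fin (n - 1) → Fin k :=
  fun q => (s (q.1, ⟨(q.2 : ℕ), by have := q.2.isLt; omega⟩)).r

/-- The vertical interior-edge colours determined by a configuration. -/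
def eV0 {k m n : ℕ} (s : Config k m n) : Fin (m - 1) × Fin n → Fin k :=
  fun q => (s (⟨(q.1 : ℕ), by have := q.1.isLt; omega⟩, q.2)).d

open Classical in
lemma key_iff {k m n : ℕ} (T : Finset (Tile k)) (γ : BC k m n) (s : Config k m n)
    (eH : Fin m × Fin (n - 1) → Fin k) (eV : Fin (m - 1) × Fin n → Fin k) :
    (∀ p, plaqColours γ eH eV p ∈ T ∧ s p = plaqColours γ eH eV p) ↔
      (IsValidTiling T γ s ∧ eH = eH0 s ∧ eV = eV0 s) := by
  constructor
  · intro h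
    have hs : ∀ p, s p = plaqColours γ eH eV p := fun p => (h p).2
    have hmem : ∀ p, s p ∈ T := fun p => by rw [hs p]; exact (h p).1
    have hr : ∀ (i : Fin m) (j : Fin n) (hj' : (j : ℕ) ≠ n - 1),
        (s (i, j)).r = eH (i, ⟨(j : ℕ), by have := j.isLt; omega⟩) := by
      intro i j hj'
      have := congrArg Tile.r (hs (i, j))
      simp only [plaqColours, Tile.r] at this
      rwa [dif_neg hj'] at this
    have hl : ∀ (i : Fin m) (j : Fin n) (hj' : (j : ℕ) ≠ 0),
        (s (i, j)).l = eH (i, ⟨(j : ℕ) - 1, by have := j.isLt; omega⟩) := by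
      intro i j hj'
      have := congrArg Tile.l (hs (i, j))
      simp only [plaqColours, Tile.l] at this
      rwa [dif_neg hj'] at this
    have hu : ∀ (i : Fin m) (j : Fin n) (hi' : (i : ℕ) ≠ 0),
        (s (i, j)).u = eV (⟨(i : ℕ) - 1, by have := i.isLt; omega⟩, j) := by
      intro i j hi'
      have := congrArg Tile.u (hs (i, j))
      simp only [plaqColours, Tile.u] at this
      rwa [dif_neg hi'] at this
    have hd : ∀ (i : Fin m) (j : Fin n) (hi' : (i : ℕ) ≠ m - 1),
        (s (i, j)).d = eV (⟨(i : ℕ), by have := i.isLt; omega⟩, j) := by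
      intro i j hi'
      have := congrArg Tile.d (hs (i, j))
      simp only [plaqColours, Tile.d] at this
      rwa [dif_neg hi'] at this
    refine ⟨⟨hmem, ?_, ?_, ?_, ?_, ?_, ?_⟩, ?_, ?_⟩
    · -- horizontal matching
      intro i j h'
      have e1 := hr i j (by omega)
      have e2 := hl i ⟨(j : ℕ) + 1, h'⟩ (show (j : ℕ) + 1 ≠ 0 by omega)
      have e3 : (⟨(j : ℕ), by have := j.isLt; omega⟩ : Fin (n - 1)) =
          ⟨(j : ℕ) + 1 - 1, by have := j.isLt; omega⟩ :=
        Fin.ext (show (j : ℕ) = (j : ℕ) + 1 - 1 by omega)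
      exact e1.trans ((congrArg (fun z => eH (i, z)) e3).trans e2.symm)
    · -- vertical matching
      intro i j h'
      have e1 := hd i j (by omega)
      have e2 := hu ⟨(i : ℕ) + 1, h'⟩ j (show (i : ℕ) + 1 ≠ 0 by omega)
      have e3 : (⟨(i : ℕ), by have := i.isLt; omega⟩ : Fin (m - 1)) =
          ⟨(i : ℕ) + 1 - 1, by have := i.isLt; omega⟩ :=
        Fin.ext (show (i : ℕ) = (i : ℕ) + 1 - 1 by omega)
      exact e1.trans ((congrArg (fun z => eV (z, j)) e3).trans e2.symm)
    · -- top boundary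
      intro hm j
      have := congrArg Tile.u (hs (⟨0, hm⟩, j))
      simp only [plaqColours, Tile.u] at this
      rwa [dif_pos trivial] at this
    · -- bottom boundary
      intro hm j
      have := congrArg Tile.d (hs (⟨m - 1, by omega⟩, j))
      simp only [plaqColours, Tile.d] at this
      rwa [dif_pos trivial] at this
    · -- left boundary
      intro hn i
      have := congrArg Tile.l (hs (i, ⟨0, hn⟩))
      simp only [plaqColours, Tile.l] at this
      rwa [dif_pos trivial] at this
    · -- right boundary
      intro hn i
      have := congrArg Tile.r (hs (i, ⟨n - 1, by omega⟩))
      simp only [plaqColours, Tile.r] at this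
      rwa [dif_pos trivial] at this
    · -- eH = eH0
      funext q
      exact (hr q.1 ⟨(q.2 : ℕ), by have := q.2.isLt; omega⟩
        (show (q.2 : ℕ) ≠ n - 1 by have := q.2.isLt; omega)).symm
    · -- eV = eV0
      funext q
      exact (hd ⟨(q.1 : ℕ), by have := q.1.isLt; omega⟩ q.2
        (show (q.1 : ℕ) ≠ m - 1 by have := q.1.isLt; omega)).symm
  · rintro ⟨⟨h1, h2, h3, h4, h5, h6, h7⟩, rfl, rfl⟩
    intro p
    obtain ⟨⟨i, hi⟩, ⟨j, hj⟩⟩ := p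
    have e1 : (s (⟨i, hi⟩, ⟨j, hj⟩)).u =
        (if _h : i = 0 then γ.top ⟨j, hj⟩ else eV0 s (⟨i - 1, Nat.sub_lt_sub_right (Nat.one_le_iff_ne_zero.mpr _h) hi⟩, ⟨j, hj⟩)) := by
      split_ifs with hh
      · subst hh; exact h4 hi ⟨j, hj⟩
      · show (s (⟨i, hi⟩, ⟨j, hj⟩)).u = (s (⟨i - 1, by omega⟩, ⟨j, hj⟩)).d
        have hv := h3 ⟨i - 1, by omega⟩ ⟨j, hj⟩ (show i - 1 + 1 < m by omega)
        have hmk : (⟨i - 1 + 1, show i - 1 + 1 < m by omega⟩ : Fin m) = ⟨i, hi⟩ :=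
          Fin.ext (show i - 1 + 1 = i by omega)
        exact (hv.trans (congrArg (fun z => (s (z, ⟨j, hj⟩)).u) hmk)).symm
    have e2 : (s (⟨i, hi⟩, ⟨j, hj⟩)).d =
        (if _h : i = m - 1 then γ.bot ⟨j, hj⟩ else eV0 s (⟨i, Nat.lt_of_le_of_ne (Nat.le_pred_of_lt hi) _h⟩, ⟨j, hj⟩)) := by
      split_ifs with hh
      · have hmk : (⟨i, hi⟩ : Fin m) = ⟨m - 1, show m - 1 < m by omega⟩ :=
          Fin.ext (show i = m - 1 from hh)
        rw [hmk]; exact h5 (show 0 < m by omega) ⟨j, hj⟩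
      · rfl
    have e3 : (s (⟨i, hi⟩, ⟨j, hj⟩)).l =
        (if _h : j = 0 then γ.left ⟨i, hi⟩ else eH0 s (⟨i, hi⟩, ⟨j - 1, Nat.sub_lt_sub_right (Nat.one_le_iff_ne_zero.mpr _h) hj⟩)) := by
      split_ifs with hh
      · subst hh; exact h6 hj ⟨i, hi⟩
      · show (s (⟨i, hi⟩, ⟨j, hj⟩)).l = (s (⟨i, hi⟩, ⟨j - 1, by omega⟩)).r
        have hv := h2 ⟨i, hi⟩ ⟨j - 1, by omega⟩ (show j - 1 + 1 < n by omega)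
        have hmk : (⟨j - 1 + 1, show j - 1 + 1 < n by omega⟩ : Fin n) = ⟨j, hj⟩ :=
          Fin.ext (show j - 1 + 1 = j by omega)
        exact (hv.trans (congrArg (fun z => (s (⟨i, hi⟩, z)).l) hmk)).symm
    have e4 : (s (⟨i, hi⟩, ⟨j, hj⟩)).r =
        (if _h : j = n - 1 then γ.right ⟨i, hi⟩ else eH0 s (⟨i, hi⟩, ⟨j, Nat.lt_of_le_of_ne (Nat.le_pred_of_lt hj) _h⟩)) := by
      split_ifs with hh
      · have hmk : (⟨j, hj⟩ : Fin n) = ⟨n - 1, show n - 1 < n by omega⟩ :=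
          Fin.ext (show j = n - 1 from hh)
        rw [hmk]; exact h7 (show 0 < n by omega) ⟨i, hi⟩
      · rfl
    have heq : s (⟨i, hi⟩, ⟨j, hj⟩) = plaqColours γ (eH0 s) (eV0 s) (⟨i, hi⟩, ⟨j, hj⟩) :=
      Prod.ext e1 (Prod.ext e2 (Prod.ext e3 e4))
    exact ⟨heq ▸ h1 (⟨i, hi⟩, ⟨j, hj⟩), heq⟩

open Classical in
lemma pepsCoeff_eq_ite {k m n : ℕ} (T : Finset (Tile k)) (γ : BC k m n)
    (s : Config k m n) :
    pepsCoeff T γ s = if IsValidTiling T γ s then 1 else 0 := by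
  have step1 : pepsCoeff T γ s =
      ∑ eH : Fin m × Fin (n - 1) → Fin k, ∑ eV : Fin (m - 1) × Fin n → Fin k,
        if IsValidTiling T γ s ∧ eH = eH0 s ∧ eV = eV0 s then (1 : ℂ) else 0 := by
    unfold pepsCoeff
    refine Finset.sum_congr rfl fun eH _ => Finset.sum_congr rfl fun eV _ => ?_
    by_cases h : ∀ p : Fin m × Fin n, plaqColours γ eH eV p ∈ T ∧ s p = plaqColours γ eH eV p
    · rw [if_pos ((key_iff T γ s eH eV).mp h)]
      refine Finset.prod_eq_one fun p _ => ?_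
      simp only [ATentry]
      exact if_pos (h p)
    · rw [if_neg fun hc => h ((key_iff T γ s eH eV).mpr hc)]
      obtain ⟨p, hp⟩ := not_forall.mp h
      refine Finset.prod_eq_zero (Finset.mem_univ p) ?_
      simp only [ATentry]
      exact if_neg hp
  rw [step1]
  by_cases hv : IsValidTiling T γ s
  · rw [if_pos hv]
    simp only [hv, true_and]
    have inner : ∀ eH, (∑ eV : Fin (m - 1) × Fin n → Fin k,
        if eH = eH0 s ∧ eV = eV0 s then (1 : ℂ) else 0) =
        if eH = eH0 s then 1 else 0 := by
      intro eH
      by_cases h : eH = eH0 s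
      · simp [h, Finset.sum_ite_eq']
      · simp [h]
    simp only [inner]
    simp [Finset.sum_ite_eq']
  · rw [if_neg hv]
    simp [hv]

/-- For every physical configuration `s`, the coefficient of `Φ_BT` at the basis vector
indexed by `s` equals `1` if `s` is a valid tiling for `(T, γ)`, and `0` otherwise. -/
theorem pepsCoeff_eq_one_iff_validTiling (k m n : ℕ) (T : Finset (Tile k)) (γ : BC k m n) :
    ∀ s : Config k m n,
      (IsValidTiling T γ s → pepsCoeff T γ s = 1) ∧
      (¬ IsValidTiling T γ s → pepsCoeff T γ s = 0) := by
  intro s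
  classical
  constructor
  · intro h; rw [pepsCoeff_eq_ite, if_pos h]
  · intro h; rw [pepsCoeff_eq_ite, if_neg h]
end

section
/- The PEPS state Φ_BT is nonzero if and only if the bounded tiling instance (Γ, T, γ) admits a valid tiling. -/
/-- The PEPS state `Φ_BT` as a vector in `ℂ^{(Γ⁴)^{m·n}}`. -/
noncomputable def PhiBT {k m n : ℕ} (T : Finset (Tile k)) (γ : BC k m n) :
    Config k m n → ℂ :=
  fun s => pepsCoeff T γ s

section
variable {k m n : ℕ}

lemma prod_ATentry {ι : Type*} [Fintype ι] (T : Finset (Tile k)) (w s : ι → Tile k) :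
    ∏ i, ATentry T (w i) (s i) = if ∀ i, w i ∈ T ∧ s i = w i then 1 else 0 :=
  Fintype.prod_boole ..

lemma Fintype.sum_boole_ne_zero_iff {α R : Type*} [Fintype α] [AddCommMonoidWithOne R]
    [CharZero R] (p : α → Prop) [DecidablePred p] :
    (∑ x, if p x then (1 : R) else 0) ≠ 0 ↔ ∃ x, p x := by
  rw [Finset.sum_boole, Nat.cast_ne_zero, Finset.card_ne_zero, Finset.filter_nonempty_iff]
  simp

lemma pepsCoeff_ne_zero_iff (T : Finset (Tile k)) (γ : BC k m n) (s : Config k m n) :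
    pepsCoeff T γ s ≠ 0 ↔
      ∃ eH eV, (∀ p, plaqColours γ eH eV p ∈ T) ∧ s = plaqColours γ eH eV := by
  simp only [pepsCoeff, prod_ATentry]
  rw [← Fintype.sum_prod_type', Fintype.sum_boole_ne_zero_iff]
  simp only [Prod.exists, forall_and, funext_iff]

def horizEdges (c : Config k m n) : Fin m × Fin (n - 1) → Fin k :=
  fun q => (c (q.1, ⟨q.2, by omega⟩)).r

def vertEdges (c : Config k m n) : Fin (m - 1) × Fin n → Fin k :=
  fun q => (c (⟨q.1, by omega⟩, q.2)).d

lemma isValidTiling_plaqColours {T : Finset (Tile k)} {γ : BC k m n}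
    {eH : Fin m × Fin (n - 1) → Fin k} {eV : Fin (m - 1) × Fin n → Fin k}
    (hT : ∀ p, plaqColours γ eH eV p ∈ T) : IsValidTiling T γ (plaqColours γ eH eV) := by
  refine ⟨hT, fun i j h => ?_, fun i j h => ?_, ?_, ?_, ?_, ?_⟩
  · simp [plaqColours, Tile.r, Tile.l, show (j : ℕ) ≠ n - 1 by omega]
  · simp [plaqColours, Tile.d, Tile.u, show (i : ℕ) ≠ m - 1 by omega]
  all_goals simp [plaqColours, Tile.u, Tile.d, Tile.l, Tile.r]

lemma plaqColours_horizEdges_vertEdges {T : Finset (Tile k)} {γ : BC k m n} {c : Config k m n}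
    (hc : IsValidTiling T γ c) : plaqColours γ (horizEdges c) (vertEdges c) = c := by
  obtain ⟨-, hH, hV, htop, hbot, hleft, hright⟩ := hc
  funext ⟨i, j⟩
  simp only [plaqColours, horizEdges, vertEdges]
  refine Prod.ext ?_ (Prod.ext ?_ (Prod.ext ?_ ?_)) <;> dsimp only <;> split_ifs with h
  · rw [show i = ⟨0, i.pos⟩ from Fin.ext h]
    exact (htop i.pos j).symm
  · have hi : (i : ℕ) - 1 + 1 = i := Nat.sub_add_cancel (Nat.one_le_iff_ne_zero.mpr h)
    simpa [hi, Tile.u] using hV ⟨i - 1, by omega⟩ j (show (i : ℕ) - 1 + 1 < m by omega)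
  · rw [show i = ⟨m - 1, by omega⟩ from Fin.ext h]
    exact (hbot i.pos j).symm
  · rfl
  · rw [show j = ⟨0, j.pos⟩ from Fin.ext h]
    exact (hleft j.pos i).symm
  · have hj : (j : ℕ) - 1 + 1 = j := Nat.sub_add_cancel (Nat.one_le_iff_ne_zero.mpr h)
    simpa [hj, Tile.l] using hH i ⟨j - 1, by omega⟩ (show (j : ℕ) - 1 + 1 < n by omega)
  · rw [show j = ⟨n - 1, by omega⟩ from Fin.ext h]
    exact (hright j.pos i).symm
  · rfl

lemma exists_isValidTiling_iff (T : Finset (Tile k)) (γ : BC k m n) :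
    (∃ c, IsValidTiling T γ c) ↔ ∃ eH eV, ∀ p, plaqColours γ eH eV p ∈ T :=
  ⟨fun ⟨c, hc⟩ =>
    ⟨horizEdges c, vertEdges c, (plaqColours_horizEdges_vertEdges hc).symm ▸ hc.1⟩,
    fun ⟨_, _, hT⟩ => ⟨_, isValidTiling_plaqColours hT⟩⟩

end

/-- The PEPS state `Φ_BT` is nonzero if and only if the bounded tiling instance `(Γ, T, γ)`
admits a valid tiling. -/
theorem PhiBT_ne_zero_iff_validTiling (k m n : ℕ) (T : Finset (Tile k)) (γ : BC k m n) :
    PhiBT T γ ≠ 0 ↔ ∃ c : Config k m n, IsValidTiling T γ c := by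
  rw [Function.ne_iff, exists_isValidTiling_iff]
  simp only [PhiBT, Pi.zero_apply, pepsCoeff_ne_zero_iff]
  exact ⟨fun ⟨_, eH, eV, hT, _⟩ => ⟨eH, eV, hT⟩, fun ⟨eH, eV, hT⟩ => ⟨_, eH, eV, hT, rfl⟩⟩
end

section
/- For all ℓx, ℓy ≥ 1, the coefficient of the torus PEPS state Φ_T(ℓx,ℓy) at a physical configuration s equals 1 if s is a valid tiling of the ℓx×ℓy torus by T and 0 otherwise; consequently Φ_T(ℓx,ℓy) ≠ 0 if and only if there exists a valid tiling of the ℓx×ℓy torus by T (equivalently, a tiling of the plane with periods (ℓx, ℓy)). -/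
/-- The plaquettes of the `ℓx × ℓy` torus. -/
abbrev TorusPlaq (ℓx ℓy : ℕ) := ZMod ℓx × ZMod ℓy

/-- A valid tiling of the `ℓx × ℓy` torus by the tile set `T`: every plaquette carries a
tile of `T` and adjacent plaquettes (including across the periodic identification) agree on
their shared edge. -/
def IsValidTorusTiling {k : ℕ} (ℓx ℓy : ℕ) (T : Finset (Tile k))
    (c : TorusPlaq ℓx ℓy → Tile k) : Prop :=
  (∀ p, c p ∈ T) ∧
  (∀ p : TorusPlaq ℓx ℓy, (c p).r = (c (p.1 + 1, p.2)).l) ∧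
  (∀ p : TorusPlaq ℓx ℓy, (c p).d = (c (p.1, p.2 + 1)).u)

/-- The 4-tuple of colours on the edges of the torus plaquette `p`, for edge assignments
`eH` (`eH p` is the colour of the right edge of `p`) and `eV` (`eV p` is the colour of the
bottom edge of `p`). -/
def torusPlaqColours {k ℓx ℓy : ℕ} (eH eV : TorusPlaq ℓx ℓy → Fin k)
    (p : TorusPlaq ℓx ℓy) : Tile k :=
  (eV (p.1, p.2 - 1), eV p, eH (p.1 - 1, p.2), eH p)

/-- The coefficient of the torus PEPS state `Φ_T(ℓx,ℓy)` at the physical basis vector indexed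
by `s`: the sum over all assignments of a colour to every edge of the torus of the product
over all plaquettes of the corresponding entry of `A_T`. -/
noncomputable def torusCoeff {k : ℕ} (ℓx ℓy : ℕ) [NeZero ℓx] [NeZero ℓy]
    (T : Finset (Tile k)) (s : TorusPlaq ℓx ℓy → Tile k) : ℂ :=
  ∑ eH : TorusPlaq ℓx ℓy → Fin k, ∑ eV : TorusPlaq ℓx ℓy → Fin k,
    ∏ p : TorusPlaq ℓx ℓy, ATentry T (torusPlaqColours eH eV p) (s p)

/-- The torus PEPS state `Φ_T(ℓx,ℓy)` as a vector in `ℂ^{(Γ⁴)^{ℓx·ℓy}}`. -/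
noncomputable def PhiTorus {k : ℕ} (ℓx ℓy : ℕ) [NeZero ℓx] [NeZero ℓy]
    (T : Finset (Tile k)) : (TorusPlaq ℓx ℓy → Tile k) → ℂ :=
  fun s => torusCoeff ℓx ℓy T s

/-- For all `ℓx, ℓy ≥ 1`, the coefficient of `Φ_T(ℓx,ℓy)` at a physical configuration `s`
equals `1` if `s` is a valid tiling of the `ℓx × ℓy` torus by `T` and `0` otherwise;
consequently `Φ_T(ℓx,ℓy) ≠ 0` iff there is a valid tiling of the `ℓx × ℓy` torus by `T`
(equivalently, a tiling of the plane with periods `(ℓx, ℓy)`). -/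
theorem torusCoeff_eq_and_PhiTorus_ne_zero_iff (k : ℕ) (T : Finset (Tile k))
    (ℓx ℓy : ℕ) [NeZero ℓx] [NeZero ℓy] :
    (∀ s : TorusPlaq ℓx ℓy → Tile k,
      (IsValidTorusTiling ℓx ℓy T s → torusCoeff ℓx ℓy T s = 1) ∧
      (¬ IsValidTorusTiling ℓx ℓy T s → torusCoeff ℓx ℓy T s = 0)) ∧
    (PhiTorus ℓx ℓy T ≠ 0 ↔ ∃ c, IsValidTorusTiling ℓx ℓy T c) := by
  classical
  have coeff_eq : ∀ s : TorusPlaq ℓx ℓy → Tile k,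
      torusCoeff ℓx ℓy T s = if IsValidTorusTiling ℓx ℓy T s then 1 else 0 := by
    intro s
    have key : ∀ eH eV : TorusPlaq ℓx ℓy → Fin k,
        (∀ p, torusPlaqColours eH eV p ∈ T ∧ s p = torusPlaqColours eH eV p) ↔
        (eH = fun p => (s p).2.2.2) ∧ (eV = fun p => (s p).2.1) ∧
          IsValidTorusTiling ℓx ℓy T s := by
      intro eH eV
      constructor
      · intro h
        have hH : eH = fun p => (s p).2.2.2 := by
          funext p
          have := (h p).2
          rw [this]; rfl
        have hV : eV = fun p => (s p).2.1 := by
          funext p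
          have := (h p).2
          rw [this]; rfl
        refine ⟨hH, hV, ?_, ?_, ?_⟩
        · intro p
          have := (h p).1
          rwa [← (h p).2] at this
        · intro p
          have h2 := (h (p.1 + 1, p.2)).2
          have h1 := (h p).2
          show (s p).2.2.2 = (s (p.1 + 1, p.2)).2.2.1
          rw [h1, h2]
          simp [torusPlaqColours]
        · intro p
          have h2 := (h (p.1, p.2 + 1)).2
          have h1 := (h p).2
          show (s p).2.1 = (s (p.1, p.2 + 1)).1
          rw [h1, h2]
          simp [torusPlaqColours]
      · rintro ⟨hH, hV, hmem, hr, hd⟩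
        subst hH; subst hV
        intro p
        have hcol : torusPlaqColours (fun p => (s p).2.2.2) (fun p => (s p).2.1) p = s p := by
          have hu : (s (p.1, p.2 - 1)).2.1 = (s p).1 := by
            have := hd (p.1, p.2 - 1)
            simpa [Tile.d, Tile.u] using this
          have hl : (s (p.1 - 1, p.2)).2.2.2 = (s p).2.2.1 := by
            have := hr (p.1 - 1, p.2)
            simpa [Tile.r, Tile.l] using this
          simp only [torusPlaqColours, hu, hl]
        rw [hcol]
        exact ⟨hmem p, rfl⟩
    unfold torusCoeff ATentry
    simp_rw [Finset.prod_boole, Finset.mem_univ, true_implies]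
    simp_rw [key]
    by_cases hval : IsValidTorusTiling ℓx ℓy T s
    · simp [hval, ite_and, Finset.sum_ite_eq']
    · simp [hval]
  refine ⟨fun s => ⟨fun h => by simp [coeff_eq s, h], fun h => by simp [coeff_eq s, h]⟩, ?_, ?_⟩
  · intro hne
    by_contra hno
    push_neg at hno
    apply hne
    funext s
    simp [PhiTorus, coeff_eq s, hno s]
  · rintro ⟨c, hc⟩ h0
    have := congrFun h0 c
    simp [PhiTorus, coeff_eq c, hc] at this
end

section
/- Let A and B be PEPS tensors with the same physical dimension d and bond dimensions D_A and D_B respectively, and let A ⊕ B denote their direct sum, a PEPS tensor with physical dimension d and bond dimension D_A + D_B whose entry at virtual indices all lying in the first block {0,…,D_A−1} equals the corresponding entry of A, whose entry at virtual indices all lying in the second block {D_A,…,D_A+D_B−1} equals the corresponding entry of B (with indices shifted by D_A), and whose entries at mixed virtual indices are 0. Then for all ℓx, ℓy ≥ 1, the torus states satisfy Φ_{A⊕B} = Φ_A + Φ_B as vectors in ℂ^{(Fin d)^{ℓx·ℓy}}. -/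
/-- A PEPS tensor with physical dimension `d` and bond dimension `D`: the entry
`A s u dn l r` is the value `A^{(u,dn,l,r)}(s)` at physical index `s` and virtual indices
`(u, dn, l, r)` (up, down, left, right). -/
abbrev PEPSTensor (d D : ℕ) := Fin d → Fin D → Fin D → Fin D → Fin D → ℂ

/-- The state of a PEPS tensor `A` on the `ℓx × ℓy` torus, as a vector in
`ℂ^{(Fin d)^{ℓx·ℓy}}`: the coefficient at a physical configuration `s` is the sum, over all
assignments of an element of `Fin D` to every edge of the torus, of the product over all
plaquettes `p` of `A^{(u,dn,l,r)}(s p)`, where `(u,dn,l,r)` are the values assigned to the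
four edges of `p` (`eH p` is the value of the right edge of `p`, `eV p` that of its bottom
edge). -/
noncomputable def torusState {d D : ℕ} (ℓx ℓy : ℕ) [NeZero ℓx] [NeZero ℓy]
    (A : PEPSTensor d D) : (TorusPlaq ℓx ℓy → Fin d) → ℂ :=
  fun s =>
    ∑ eH : TorusPlaq ℓx ℓy → Fin D, ∑ eV : TorusPlaq ℓx ℓy → Fin D,
      ∏ p : TorusPlaq ℓx ℓy,
        A (s p) (eV (p.1, p.2 - 1)) (eV p) (eH (p.1 - 1, p.2)) (eH p)

/-- The direct sum `A ⊕ B` of two PEPS tensors with the same physical dimension `d`: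
a PEPS tensor with bond dimension `D_A + D_B` whose entries with all virtual indices in the
first block are those of `A`, whose entries with all virtual indices in the second block are
those of `B` (indices shifted by `D_A`), and whose entries at mixed virtual indices are `0`. -/
noncomputable def directSum {d DA DB : ℕ} (A : PEPSTensor d DA) (B : PEPSTensor d DB) :
    PEPSTensor d (DA + DB) := fun s u dn l r =>
  if h : (u : ℕ) < DA ∧ (dn : ℕ) < DA ∧ (l : ℕ) < DA ∧ (r : ℕ) < DA then
    A s ⟨u, h.1⟩ ⟨dn, h.2.1⟩ ⟨l, h.2.2.1⟩ ⟨r, h.2.2.2⟩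
  else if h' : DA ≤ (u : ℕ) ∧ DA ≤ (dn : ℕ) ∧ DA ≤ (l : ℕ) ∧ DA ≤ (r : ℕ) then
    B s ⟨(u : ℕ) - DA, by have := u.isLt; omega⟩ ⟨(dn : ℕ) - DA, by have := dn.isLt; omega⟩
      ⟨(l : ℕ) - DA, by have := l.isLt; omega⟩ ⟨(r : ℕ) - DA, by have := r.isLt; omega⟩
  else 0

private lemma directSum_apply_left {d DA DB : ℕ} (A : PEPSTensor d DA) (B : PEPSTensor d DB)
    (s : Fin d) (u dn l r : Fin DA) :
    directSum A B s (Fin.castAdd DB u) (Fin.castAdd DB dn) (Fin.castAdd DB l)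
      (Fin.castAdd DB r) = A s u dn l r := by
  simp [directSum, u.isLt, dn.isLt, l.isLt, r.isLt]

private lemma directSum_apply_right {d DA DB : ℕ} (A : PEPSTensor d DA) (B : PEPSTensor d DB)
    (s : Fin d) (u dn l r : Fin DB) :
    directSum A B s (Fin.natAdd DA u) (Fin.natAdd DA dn) (Fin.natAdd DA l)
      (Fin.natAdd DA r) = B s u dn l r := by
  rw [directSum, dif_neg (by simp), dif_pos (by simp)]
  simp

private lemma pair_sum {α β : Type*} [Fintype α] [Fintype β] (f : α → β → ℂ) :
    (∑ a : α, ∑ b : β, f a b) = ∑ x : α × β, f x.1 x.2 :=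
  (Fintype.sum_prod_type (fun x : α × β => f x.1 x.2)).symm

private lemma connect {d DA DB : ℕ} (A : PEPSTensor d DA) (B : PEPSTensor d DB)
    {ℓx ℓy : ℕ} [NeZero ℓx] [NeZero ℓy] (s : TorusPlaq ℓx ℓy → Fin d)
    (eH eV : TorusPlaq ℓx ℓy → Fin (DA + DB))
    (h : ∀ p : TorusPlaq ℓx ℓy,
      directSum A B (s p) (eV (p.1, p.2 - 1)) (eV p) (eH (p.1 - 1, p.2)) (eH p) ≠ 0) :
    (∀ p : TorusPlaq ℓx ℓy, ((eH p : ℕ) < DA ∧ (eV p : ℕ) < DA)) ∨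
      (∀ p : TorusPlaq ℓx ℓy, (DA ≤ (eH p : ℕ) ∧ DA ≤ (eV p : ℕ))) := by
  have hc : ∀ (x : ZMod ℓx) (y : ZMod ℓy),
      ((eV (x, y - 1) : ℕ) < DA ∧ (eV (x, y) : ℕ) < DA ∧ (eH (x - 1, y) : ℕ) < DA ∧
        (eH (x, y) : ℕ) < DA) ∨
      (DA ≤ (eV (x, y - 1) : ℕ) ∧ DA ≤ (eV (x, y) : ℕ) ∧ DA ≤ (eH (x - 1, y) : ℕ) ∧
        DA ≤ (eH (x, y) : ℕ)) := by
    intro x y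
    by_contra hcon
    rw [not_or] at hcon
    refine h (x, y) ?_
    show directSum A B (s (x, y)) (eV (x, y - 1)) (eV (x, y)) (eH (x - 1, y)) (eH (x, y)) = 0
    simp only [directSum]
    rw [dif_neg hcon.1, dif_neg hcon.2]
  -- Q-shift invariance
  have hQstep : ∀ (x : ZMod ℓx) (y : ZMod ℓy),
      ((eH (x, y) : ℕ) < DA ↔ (eH (x - 1, y) : ℕ) < DA) := by
    intro x y
    rcases hc x y with ⟨h1, h2, h3, h4⟩ | ⟨h1, h2, h3, h4⟩
    · exact iff_of_true h4 h3
    · exact iff_of_false (by omega) (by omega)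
  have hQR : ∀ (x : ZMod ℓx) (y : ZMod ℓy),
      ((eH (x, y) : ℕ) < DA ↔ (eV (x, y) : ℕ) < DA) := by
    intro x y
    rcases hc x y with ⟨h1, h2, h3, h4⟩ | ⟨h1, h2, h3, h4⟩
    · exact iff_of_true h4 h2
    · exact iff_of_false (by omega) (by omega)
  have hRstep : ∀ (x : ZMod ℓx) (y : ZMod ℓy),
      ((eV (x, y) : ℕ) < DA ↔ (eV (x, y - 1) : ℕ) < DA) := by
    intro x y
    rcases hc x y with ⟨h1, h2, h3, h4⟩ | ⟨h1, h2, h3, h4⟩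
    · exact iff_of_true h2 h1
    · exact iff_of_false (by omega) (by omega)
  have hQn : ∀ (n : ℕ) (x : ZMod ℓx) (y : ZMod ℓy),
      ((eH (x - (n : ZMod ℓx), y) : ℕ) < DA ↔ (eH (x, y) : ℕ) < DA) := by
    intro n
    induction n with
    | zero => intro x y; norm_num
    | succ n ih =>
      intro x y
      have e1 : x - ((n + 1 : ℕ) : ZMod ℓx) = (x - (n : ZMod ℓx)) - 1 := by
        push_cast; ring
      rw [e1]
      exact (hQstep (x - (n : ZMod ℓx)) y).symm.trans (ih x y)
  have hRn : ∀ (n : ℕ) (x : ZMod ℓx) (y : ZMod ℓy),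
      ((eV (x, y - (n : ZMod ℓy)) : ℕ) < DA ↔ (eV (x, y) : ℕ) < DA) := by
    intro n
    induction n with
    | zero => intro x y; norm_num
    | succ n ih =>
      intro x y
      have e1 : y - ((n + 1 : ℕ) : ZMod ℓy) = (y - (n : ZMod ℓy)) - 1 := by
        push_cast; ring
      rw [e1]
      exact (hRstep x (y - (n : ZMod ℓy))).symm.trans (ih x y)
  have hQ0 : ∀ (x : ZMod ℓx) (y : ZMod ℓy),
      ((eH (x, y) : ℕ) < DA ↔ (eH (0, 0) : ℕ) < DA) := by
    intro x y
    have hy : y - ((y.val : ℕ) : ZMod ℓy) = 0 := by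
      rw [ZMod.natCast_val, ZMod.cast_id, sub_self]
    have hx : x - ((x.val : ℕ) : ZMod ℓx) = 0 := by
      rw [ZMod.natCast_val, ZMod.cast_id, sub_self]
    calc ((eH (x, y) : ℕ) < DA) ↔ ((eV (x, y) : ℕ) < DA) := hQR x y
      _ ↔ ((eV (x, y - ((y.val : ℕ) : ZMod ℓy)) : ℕ) < DA) := (hRn y.val x y).symm
      _ ↔ ((eV (x, 0) : ℕ) < DA) := by rw [hy]
      _ ↔ ((eH (x, 0) : ℕ) < DA) := (hQR x 0).symm
      _ ↔ ((eH (x - ((x.val : ℕ) : ZMod ℓx), 0) : ℕ) < DA) := (hQn x.val x 0).symm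
      _ ↔ ((eH (0, 0) : ℕ) < DA) := by rw [hx]
  by_cases h00 : (eH (0, 0) : ℕ) < DA
  · left
    rintro ⟨x, y⟩
    have hq : (eH (x, y) : ℕ) < DA := (hQ0 x y).mpr h00
    exact ⟨hq, (hQR x y).mp hq⟩
  · right
    rintro ⟨x, y⟩
    have hq : ¬ (eH (x, y) : ℕ) < DA := fun hh => h00 ((hQ0 x y).mp hh)
    rcases hc x y with ⟨h1, h2, h3, h4⟩ | ⟨h1, h2, h3, h4⟩
    · exact absurd h4 hq
    · exact ⟨h4, h2⟩

/-- For all `ℓx, ℓy ≥ 1`, the torus states satisfy `Φ_{A⊕B} = Φ_A + Φ_B`. -/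
theorem torusState_directSum {d DA DB : ℕ} (A : PEPSTensor d DA) (B : PEPSTensor d DB)
    (ℓx ℓy : ℕ) [NeZero ℓx] [NeZero ℓy] :
    torusState ℓx ℓy (directSum A B) =
      torusState ℓx ℓy A + torusState ℓx ℓy B := by
  classical
  funext s
  simp only [torusState, Pi.add_apply]
  rw [pair_sum, pair_sum, pair_sum]
  set F : ((TorusPlaq ℓx ℓy → Fin (DA + DB)) × (TorusPlaq ℓx ℓy → Fin (DA + DB))) → ℂ :=
    fun e => ∏ p : TorusPlaq ℓx ℓy,
      directSum A B (s p) (e.2 (p.1, p.2 - 1)) (e.2 p) (e.1 (p.1 - 1, p.2)) (e.1 p) with hF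
  have hsplit : ∀ e : (TorusPlaq ℓx ℓy → Fin (DA + DB)) × (TorusPlaq ℓx ℓy → Fin (DA + DB)),
      F e = (if (∀ p : TorusPlaq ℓx ℓy, ((e.1 p : ℕ) < DA ∧ (e.2 p : ℕ) < DA)) then F e else 0)
          + (if (∀ p : TorusPlaq ℓx ℓy, (DA ≤ (e.1 p : ℕ) ∧ DA ≤ (e.2 p : ℕ))) then F e else 0) := by
    intro e
    by_cases hA : ∀ p : TorusPlaq ℓx ℓy, ((e.1 p : ℕ) < DA ∧ (e.2 p : ℕ) < DA)
    · have hB : ¬ ∀ p : TorusPlaq ℓx ℓy, (DA ≤ (e.1 p : ℕ) ∧ DA ≤ (e.2 p : ℕ)) := by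
        intro hB
        have h1 := (hA (0, 0)).1
        have h2 := (hB (0, 0)).1
        omega
      rw [if_pos hA, if_neg hB, add_zero]
    · by_cases hB : ∀ p : TorusPlaq ℓx ℓy, (DA ≤ (e.1 p : ℕ) ∧ DA ≤ (e.2 p : ℕ))
      · rw [if_neg hA, if_pos hB, zero_add]
      · rw [if_neg hA, if_neg hB, add_zero]
        by_contra hne
        have hfac : ∀ p : TorusPlaq ℓx ℓy,
            directSum A B (s p) (e.2 (p.1, p.2 - 1)) (e.2 p) (e.1 (p.1 - 1, p.2)) (e.1 p) ≠ 0 :=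
          fun p => Finset.prod_ne_zero_iff.mp hne p (Finset.mem_univ p)
        rcases connect A B s e.1 e.2 hfac with h | h
        · exact hA h
        · exact hB h
  rw [Finset.sum_congr rfl (fun e _ => hsplit e), Finset.sum_add_distrib]
  have hAsum : (∑ a : (TorusPlaq ℓx ℓy → Fin DA) × (TorusPlaq ℓx ℓy → Fin DA),
        ∏ p : TorusPlaq ℓx ℓy, A (s p) (a.2 (p.1, p.2 - 1)) (a.2 p) (a.1 (p.1 - 1, p.2)) (a.1 p))
      = ∑ e ∈ Finset.univ.filter
          (fun e : (TorusPlaq ℓx ℓy → Fin (DA + DB)) × (TorusPlaq ℓx ℓy → Fin (DA + DB)) =>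
            ∀ p : TorusPlaq ℓx ℓy, ((e.1 p : ℕ) < DA ∧ (e.2 p : ℕ) < DA)), F e := by
    refine Finset.sum_bij'
      (fun a _ => ((fun p => Fin.castAdd DB (a.1 p)), (fun p => Fin.castAdd DB (a.2 p))))
      (fun e he => ((fun p => ⟨(e.1 p : ℕ), ((Finset.mem_filter.mp he).2 p).1⟩),
        (fun p => ⟨(e.2 p : ℕ), ((Finset.mem_filter.mp he).2 p).2⟩)))
      (fun a _ => Finset.mem_filter.mpr ⟨Finset.mem_univ _,
        fun p => ⟨(a.1 p).isLt, (a.2 p).isLt⟩⟩)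
      (fun e he => Finset.mem_univ _)
      (fun a ha => rfl)
      (fun e he => rfl)
      (fun a ha => Finset.prod_congr rfl fun p _ => (directSum_apply_left A B _ _ _ _ _).symm)
  have hBsum : (∑ a : (TorusPlaq ℓx ℓy → Fin DB) × (TorusPlaq ℓx ℓy → Fin DB),
        ∏ p : TorusPlaq ℓx ℓy, B (s p) (a.2 (p.1, p.2 - 1)) (a.2 p) (a.1 (p.1 - 1, p.2)) (a.1 p))
      = ∑ e ∈ Finset.univ.filter
          (fun e : (TorusPlaq ℓx ℓy → Fin (DA + DB)) × (TorusPlaq ℓx ℓy → Fin (DA + DB)) =>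
            ∀ p : TorusPlaq ℓx ℓy, (DA ≤ (e.1 p : ℕ) ∧ DA ≤ (e.2 p : ℕ))), F e := by
    refine Finset.sum_bij'
      (fun a _ => ((fun p => Fin.natAdd DA (a.1 p)), (fun p => Fin.natAdd DA (a.2 p))))
      (fun e he => ((fun p => ⟨(e.1 p : ℕ) - DA, by
          have h1 := (e.1 p).isLt
          have h2 := ((Finset.mem_filter.mp he).2 p).1; omega⟩),
        (fun p => ⟨(e.2 p : ℕ) - DA, by
          have h1 := (e.2 p).isLt
          have h2 := ((Finset.mem_filter.mp he).2 p).2; omega⟩)))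
      (fun a _ => Finset.mem_filter.mpr ⟨Finset.mem_univ _,
        fun p => ⟨Nat.le_add_right _ _, Nat.le_add_right _ _⟩⟩)
      (fun e he => Finset.mem_univ _)
      ?_ ?_
      (fun a ha => Finset.prod_congr rfl fun p _ => (directSum_apply_right A B _ _ _ _ _).symm)
    · intro a ha
      refine Prod.ext ?_ ?_ <;> funext p <;> apply Fin.ext <;>
        simp [Fin.natAdd]
    · intro e he
      have hm := (Finset.mem_filter.mp he).2
      refine Prod.ext ?_ ?_ <;> funext p <;> apply Fin.ext <;> simp [Fin.natAdd]
      · exact Nat.add_sub_cancel' (hm p).1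
      · exact Nat.add_sub_cancel' (hm p).2
  rw [← Finset.sum_filter, ← Finset.sum_filter, ← hAsum, ← hBsum]
end

section
/- Let A_G, A_Z, A_T be PEPS tensors with physical dimensions d₁, d₂, d₃ and bond dimensions D₁, D₂, D₃ respectively, and let A = A_G ⊕ (A_Z ⊗ A_T) be the composed PEPS tensor with physical dimension d₁ + d₂·d₃ and bond dimension D₁ + D₂·D₃. Then for every rectangular a×b region R of the lattice, the range of the boundary map satisfies range χ(A,R) = ι₁(range χ(A_G,R)) ⊕ ι₂(range χ(A_Z,R) ⊗ range χ(A_T,R)), where ι₁ and ι₂ are the natural embeddings of (ℂ^{d₁})^{⊗ab} and of (ℂ^{d₂} ⊗ ℂ^{d₃})^{⊗ab} into ((ℂ^{d₁} ⊕ ℂ^{d₂} ⊗ ℂ^{d₃}))^{⊗ab} ≅ (ℂ^{d₁+d₂d₃})^{⊗ab}, and range χ(A_Z,R) ⊗ range χ(A_T,R) denotes the tensor product of the two subspaces inside (ℂ^{d₂})^{⊗ab} ⊗ (ℂ^{d₃})^{⊗ab} ≅ (ℂ^{d₂} ⊗ ℂ^{d₃})^{⊗ab}. -/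
/-- The sites of a rectangular `a × b` region (first index: row, increasing downwards;
second index: column). -/
abbrev Sites (a b : ℕ) := Fin a × Fin b

/-- An assignment of virtual indices to the `2a + 2b` boundary legs of an `a × b` region:
the top, bottom, left and right legs. -/
abbrev BIdx (D a b : ℕ) :=
  (Fin b → Fin D) × (Fin b → Fin D) × (Fin a → Fin D) × (Fin a → Fin D)

/-- The virtual indices `(u, dn, l, r)` seen by the site `p` of the region, given the
boundary assignment `C` and the assignments `eH`, `eV` on the interior bonds. -/
def siteVirtual {D a b : ℕ} (C : BIdx D a b)
    (eH : Fin a × Fin (b - 1) → Fin D) (eV : Fin (a - 1) × Fin b → Fin D)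
    (p : Sites a b) : Fin D × Fin D × Fin D × Fin D :=
  ( if _h : (p.1 : ℕ) = 0 then C.1 p.2
      else eV (⟨(p.1 : ℕ) - 1, by have := p.1.isLt; omega⟩, p.2),
    if _h : (p.1 : ℕ) = a - 1 then C.2.1 p.2
      else eV (⟨(p.1 : ℕ), by have := p.1.isLt; omega⟩, p.2),
    if _h : (p.2 : ℕ) = 0 then C.2.2.1 p.1
      else eH (p.1, ⟨(p.2 : ℕ) - 1, by have := p.2.isLt; omega⟩),
    if _h : (p.2 : ℕ) = b - 1 then C.2.2.2 p.1
      else eH (p.1, ⟨(p.2 : ℕ), by have := p.2.isLt; omega⟩) )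

/-- The boundary map `χ(A, R)` of the `a × b` region `R`, as a matrix from the boundary
space `ℂ^{D^{2a+2b}}` to the physical space `(ℂ^d)^{⊗ab}`: the entry between the boundary
basis vector `C` and the physical basis vector `s` is the sum, over all assignments of
virtual indices to the interior bonds of `R`, of the product over all sites `p` of the
entry of `A` with physical index `s p` and virtual indices read off from the interior
bonds and from `C`. -/
noncomputable def chi {d D : ℕ} (A : PEPSTensor d D) (a b : ℕ) :
    Matrix (Sites a b → Fin d) (BIdx D a b) ℂ :=
  fun s C =>
    ∑ eH : Fin a × Fin (b - 1) → Fin D, ∑ eV : Fin (a - 1) × Fin b → Fin D,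
      ∏ p : Sites a b,
        A (s p) (siteVirtual C eH eV p).1 (siteVirtual C eH eV p).2.1
          (siteVirtual C eH eV p).2.2.1 (siteVirtual C eH eV p).2.2.2

/-- Decode a physical index of the second block of `Fin (d₁ + d₂·d₃)` as a pair in
`Fin d₂ × Fin d₃`. -/
def splitIdx {d1 d2 d3 : ℕ} (s : Fin (d1 + d2 * d3)) (hs : d1 ≤ (s : ℕ)) :
    Fin d2 × Fin d3 :=
  finProdFinEquiv.symm ⟨(s : ℕ) - d1, by have := s.isLt; omega⟩

/-- The composed PEPS tensor `A = A_G ⊕ (A_Z ⊗ A_T)`, with physical dimension `d₁ + d₂·d₃`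
and bond dimension `D₁ + D₂·D₃`: its entries with physical index and all four virtual
indices in the first block are those of `A_G`; its entries with physical index and all four
virtual indices in the second block are the products of the corresponding entries of `A_Z`
and `A_T`; all other (mixed) entries are `0`. -/
noncomputable def composed {d1 D1 d2 D2 d3 D3 : ℕ} (AG : PEPSTensor d1 D1)
    (AZ : PEPSTensor d2 D2) (AT : PEPSTensor d3 D3) :
    PEPSTensor (d1 + d2 * d3) (D1 + D2 * D3) := fun s u dn l r =>
  if hs : (s : ℕ) < d1 then
    if h : (u : ℕ) < D1 ∧ (dn : ℕ) < D1 ∧ (l : ℕ) < D1 ∧ (r : ℕ) < D1 then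
      AG ⟨s, hs⟩ ⟨u, h.1⟩ ⟨dn, h.2.1⟩ ⟨l, h.2.2.1⟩ ⟨r, h.2.2.2⟩
    else 0
  else
    if h : D1 ≤ (u : ℕ) ∧ D1 ≤ (dn : ℕ) ∧ D1 ≤ (l : ℕ) ∧ D1 ≤ (r : ℕ) then
      AZ (splitIdx s (by omega)).1 (splitIdx u h.1).1 (splitIdx dn h.2.1).1
          (splitIdx l h.2.2.1).1 (splitIdx r h.2.2.2).1 *
      AT (splitIdx s (by omega)).2 (splitIdx u h.1).2 (splitIdx dn h.2.1).2
          (splitIdx l h.2.2.1).2 (splitIdx r h.2.2.2).2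
    else 0

/-- The natural embedding `ι₁` of `(ℂ^{d₁})^{⊗ab}` into `(ℂ^{d₁+d₂d₃})^{⊗ab}` induced by the
inclusion of `Fin d₁` as the first block, as a matrix. -/
noncomputable def iota1 (d1 d2 d3 a b : ℕ) :
    Matrix (Sites a b → Fin (d1 + d2 * d3)) (Sites a b → Fin d1) ℂ :=
  fun s' s => if ∀ p, (s' p : ℕ) = (s p : ℕ) then 1 else 0

/-- The natural embedding `ι₂` of `(ℂ^{d₂} ⊗ ℂ^{d₃})^{⊗ab}` into `(ℂ^{d₁+d₂d₃})^{⊗ab}`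
induced by the identification of `Fin d₂ × Fin d₃` with the second block, as a matrix. -/
noncomputable def iota2 (d1 d2 d3 a b : ℕ) :
    Matrix (Sites a b → Fin (d1 + d2 * d3)) (Sites a b → Fin d2 × Fin d3) ℂ :=
  fun s' s => if ∀ p, (s' p : ℕ) = d1 + (finProdFinEquiv (s p) : ℕ) then 1 else 0

/-- The tensor product of two subspaces `S ≤ (ℂ^{d₂})^{⊗ab}` and `T ≤ (ℂ^{d₃})^{⊗ab}`,
viewed inside `(ℂ^{d₂} ⊗ ℂ^{d₃})^{⊗ab}` (concretely, the span of the products of a vector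
of `S` in the first factors with a vector of `T` in the second factors). -/
noncomputable def subspaceTensor {d2 d3 a b : ℕ}
    (S : Submodule ℂ ((Sites a b → Fin d2) → ℂ))
    (T : Submodule ℂ ((Sites a b → Fin d3) → ℂ)) :
    Submodule ℂ ((Sites a b → Fin d2 × Fin d3) → ℂ) :=
  Submodule.span ℂ
    {f | ∃ g ∈ S, ∃ h ∈ T, f = fun s => g (fun p => (s p).1) * h (fun p => (s p).2)}

/-!
A nonzero term of the contraction defining `χ(A, R)` for `A = A_G ⊕ (A_Z ⊗ A_T)` lives in a
single block: each site forces its physical index and its four bonds into the same block, and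
neighbouring sites share a bond. Hence the column of `χ(A, R)` at a boundary condition in the first
block is `ι₁` of a column of `χ(A_G, R)`, at one in the second block it is `ι₂` of the product of a
column of `χ(A_Z, R)` and a column of `χ(A_T, R)` (the product tensor contracts factorwise), and at
a mixed boundary condition it vanishes. Both sides are thus spanned by the same vectors.
-/

open Function
open scoped Matrix

namespace BIdx

variable {D D' a b : ℕ}

def map (φ : Fin D → Fin D') (C : BIdx D a b) : BIdx D' a b :=
  (φ ∘ C.1, φ ∘ C.2.1, φ ∘ C.2.2.1, φ ∘ C.2.2.2)

def legs (C : BIdx D a b) : Set (Fin D) :=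
  Set.range C.1 ∪ Set.range C.2.1 ∪ Set.range C.2.2.1 ∪ Set.range C.2.2.2

lemma exists_map_eq {φ : Fin D → Fin D'} {C : BIdx D' a b} (h : C.legs ⊆ Set.range φ) :
    ∃ C₀ : BIdx D a b, C₀.map φ = C := by
  simp only [legs, Set.union_subset_iff, Set.range_subset_range_iff_exists_comp] at h
  obtain ⟨⟨⟨⟨f₁, h₁⟩, f₂, h₂⟩, f₃, h₃⟩, f₄, h₄⟩ := h
  exact ⟨(f₁, f₂, f₃, f₄), by rw [map, ← h₁, ← h₂, ← h₃, ← h₄]⟩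

def zip {D₂ D₃ : ℕ} (C₂ : BIdx D₂ a b) (C₃ : BIdx D₃ a b) : BIdx (D₂ * D₃) a b :=
  (fun j => finProdFinEquiv (C₂.1 j, C₃.1 j), fun j => finProdFinEquiv (C₂.2.1 j, C₃.2.1 j),
    fun i => finProdFinEquiv (C₂.2.2.1 i, C₃.2.2.1 i),
    fun i => finProdFinEquiv (C₂.2.2.2 i, C₃.2.2.2 i))

lemma exists_zip_eq {D₂ D₃ : ℕ} (C : BIdx (D₂ * D₃) a b) : ∃ C₂ C₃, zip C₂ C₃ = C :=
  ⟨C.map fun u => (finProdFinEquiv.symm u).1, C.map fun u => (finProdFinEquiv.symm u).2,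
    by simp only [zip, map, comp_apply, Prod.mk.eta, Equiv.apply_symm_apply]⟩

end BIdx

section siteVirtual

variable {D a b : ℕ} (C : BIdx D a b) (eH : Fin a × Fin (b - 1) → Fin D)
  (eV : Fin (a - 1) × Fin b → Fin D)

lemma siteVirtual_map {D' : ℕ} (φ : Fin D → Fin D') (p : Sites a b) :
    siteVirtual (C.map φ) (φ ∘ eH) (φ ∘ eV) p =
      (φ (siteVirtual C eH eV p).1, φ (siteVirtual C eH eV p).2.1,
        φ (siteVirtual C eH eV p).2.2.1, φ (siteVirtual C eH eV p).2.2.2) := by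
  simp only [siteVirtual, BIdx.map]
  split_ifs <;> rfl

lemma siteVirtual_zip {D₂ D₃ : ℕ} (C₂ : BIdx D₂ a b) (C₃ : BIdx D₃ a b)
    (eH₂ : Fin a × Fin (b - 1) → Fin D₂) (eV₂ : Fin (a - 1) × Fin b → Fin D₂)
    (eH₃ : Fin a × Fin (b - 1) → Fin D₃) (eV₃ : Fin (a - 1) × Fin b → Fin D₃) (p : Sites a b) :
    siteVirtual (C₂.zip C₃) (fun x => finProdFinEquiv (eH₂ x, eH₃ x))
        (fun x => finProdFinEquiv (eV₂ x, eV₃ x)) p =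
      (finProdFinEquiv ((siteVirtual C₂ eH₂ eV₂ p).1, (siteVirtual C₃ eH₃ eV₃ p).1),
        finProdFinEquiv ((siteVirtual C₂ eH₂ eV₂ p).2.1, (siteVirtual C₃ eH₃ eV₃ p).2.1),
        finProdFinEquiv ((siteVirtual C₂ eH₂ eV₂ p).2.2.1, (siteVirtual C₃ eH₃ eV₃ p).2.2.1),
        finProdFinEquiv ((siteVirtual C₂ eH₂ eV₂ p).2.2.2, (siteVirtual C₃ eH₃ eV₃ p).2.2.2)) := by
  simp only [siteVirtual, BIdx.zip]
  split_ifs <;> rfl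

lemma siteVirtual_up_zero (ha : 0 < a) (j : Fin b) :
    (siteVirtual C eH eV (⟨0, ha⟩, j)).1 = C.1 j := rfl

lemma siteVirtual_down_last (ha : 0 < a) (j : Fin b) :
    (siteVirtual C eH eV (⟨a - 1, by omega⟩, j)).2.1 = C.2.1 j := by
  simp [siteVirtual]

lemma siteVirtual_left_zero (hb : 0 < b) (i : Fin a) :
    (siteVirtual C eH eV (i, ⟨0, hb⟩)).2.2.1 = C.2.2.1 i := rfl

lemma siteVirtual_right_last (hb : 0 < b) (i : Fin a) :
    (siteVirtual C eH eV (i, ⟨b - 1, by omega⟩)).2.2.2 = C.2.2.2 i := by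
  simp [siteVirtual]

lemma siteVirtual_down (i : ℕ) (hi : i + 1 < a) (j : Fin b) :
    (siteVirtual C eH eV (⟨i, by omega⟩, j)).2.1 = eV (⟨i, by omega⟩, j) := by
  simp [siteVirtual, show i ≠ a - 1 by omega]

lemma siteVirtual_up_succ (i : ℕ) (hi : i + 1 < a) (j : Fin b) :
    (siteVirtual C eH eV (⟨i + 1, hi⟩, j)).1 = eV (⟨i, by omega⟩, j) := by
  simp [siteVirtual]

lemma siteVirtual_right (i : Fin a) (j : ℕ) (hj : j + 1 < b) :
    (siteVirtual C eH eV (i, ⟨j, by omega⟩)).2.2.2 = eH (i, ⟨j, by omega⟩) := by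
  simp [siteVirtual, show j ≠ b - 1 by omega]

lemma siteVirtual_left_succ (i : Fin a) (j : ℕ) (hj : j + 1 < b) :
    (siteVirtual C eH eV (i, ⟨j + 1, hj⟩)).2.2.1 = eH (i, ⟨j, by omega⟩) := by
  simp [siteVirtual]

end siteVirtual

lemma Fin.apply_eq_of_forall_succ {n : ℕ} {α : Sort*} {f : Fin n → α}
    (h : ∀ i (hi : i + 1 < n), f ⟨i, by omega⟩ = f ⟨i + 1, hi⟩) (i j : Fin n) : f i = f j := by
  have hzero : ∀ k (hk : k < n), f ⟨k, hk⟩ = f ⟨0, by omega⟩ := by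
    intro k
    induction k with
    | zero => intro _; rfl
    | succ k ih => intro hk; rw [← h k hk, ih]
  exact (hzero i i.isLt).trans (hzero j j.isLt).symm

lemma Fin.prod_apply_eq_of_forall_succ {m n : ℕ} {α : Sort*} {f : Fin m × Fin n → α}
    (hv : ∀ i (hi : i + 1 < m) j, f (⟨i, by omega⟩, j) = f (⟨i + 1, hi⟩, j))
    (hh : ∀ i j (hj : j + 1 < n), f (i, ⟨j, by omega⟩) = f (i, ⟨j + 1, hj⟩))
    (p q : Fin m × Fin n) : f p = f q :=
  calc f p = f (p.1, q.2) := Fin.apply_eq_of_forall_succ (f := fun j => f (p.1, j)) (hh p.1) _ _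
    _ = f q := Fin.apply_eq_of_forall_succ (f := fun i => f (i, q.2)) (fun i hi => hv i hi q.2) _ _

def configWeight {d D a b : ℕ} (A : PEPSTensor d D) (s : Sites a b → Fin d) (C : BIdx D a b)
    (eH : Fin a × Fin (b - 1) → Fin D) (eV : Fin (a - 1) × Fin b → Fin D) : ℂ :=
  ∏ p : Sites a b, A (s p) (siteVirtual C eH eV p).1 (siteVirtual C eH eV p).2.1
    (siteVirtual C eH eV p).2.2.1 (siteVirtual C eH eV p).2.2.2

lemma chi_apply {d D : ℕ} (A : PEPSTensor d D) (a b : ℕ) (s : Sites a b → Fin d)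
    (C : BIdx D a b) :
    chi A a b s C = ∑ eH, ∑ eV, configWeight A s C eH eV := rfl

lemma chi_eq_one {d D a b : ℕ} (A : PEPSTensor d D) (hab : a = 0 ∨ b = 0)
    (s : Sites a b → Fin d) (C : BIdx D a b) : chi A a b s C = 1 := by
  rcases hab with rfl | rfl <;> simp [chi_apply, configWeight]

namespace PEPSTensor

def RespectsBlocks {d D : ℕ} (A : PEPSTensor d D) (P : Fin d → Prop) (B : Fin D → Prop) :
    Prop :=
  ∀ x u dn l r, A x u dn l r ≠ 0 → (B u ↔ P x) ∧ (B dn ↔ P x) ∧ (B l ↔ P x) ∧ (B r ↔ P x)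

namespace RespectsBlocks

variable {d D a b : ℕ} {A : PEPSTensor d D} {P : Fin d → Prop} {B : Fin D → Prop}

lemma compl (hA : A.RespectsBlocks P B) : A.RespectsBlocks (¬ P ·) (¬ B ·) := by
  intro x u dn l r hx
  obtain ⟨hu, hdn, hl, hr⟩ := hA x u dn l r hx
  exact ⟨not_congr hu, not_congr hdn, not_congr hl, not_congr hr⟩

variable {s : Sites a b → Fin d} {C : BIdx D a b} {eH : Fin a × Fin (b - 1) → Fin D}
  {eV : Fin (a - 1) × Fin b → Fin D}

lemma siteVirtual_iff (hA : A.RespectsBlocks P B) (hw : configWeight A s C eH eV ≠ 0)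
    (p : Sites a b) :
    (B (siteVirtual C eH eV p).1 ↔ P (s p)) ∧ (B (siteVirtual C eH eV p).2.1 ↔ P (s p)) ∧
      (B (siteVirtual C eH eV p).2.2.1 ↔ P (s p)) ∧ (B (siteVirtual C eH eV p).2.2.2 ↔ P (s p)) :=
  hA _ _ _ _ _ (Finset.prod_ne_zero_iff.1 hw p (Finset.mem_univ p))

/-- Neighbouring sites share a bond, and the grid is connected. -/
lemma iff_of_configWeight_ne_zero (hA : A.RespectsBlocks P B) (hw : configWeight A s C eH eV ≠ 0)
    (p q : Sites a b) : P (s p) ↔ P (s q) := by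
  refine Iff.of_eq (Fin.prod_apply_eq_of_forall_succ (f := fun p => P (s p)) ?_ ?_ p q)
  · intro i hi j
    have hdown := (hA.siteVirtual_iff hw (⟨i, by omega⟩, j)).2.1
    have hup := (hA.siteVirtual_iff hw (⟨i + 1, hi⟩, j)).1
    rw [siteVirtual_down C eH eV i hi] at hdown
    rw [siteVirtual_up_succ C eH eV i hi] at hup
    exact propext (hdown.symm.trans hup)
  · intro i j hj
    have hright := (hA.siteVirtual_iff hw (i, ⟨j, by omega⟩)).2.2.2
    have hleft := (hA.siteVirtual_iff hw (i, ⟨j + 1, hj⟩)).2.2.1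
    rw [siteVirtual_right C eH eV i j hj] at hright
    rw [siteVirtual_left_succ C eH eV i j hj] at hleft
    exact propext (hright.symm.trans hleft)

lemma legs_iff (hA : A.RespectsBlocks P B) (hw : configWeight A s C eH eV ≠ 0)
    (ha : 0 < a) (hb : 0 < b) {x : Fin D} (hx : x ∈ C.legs) (q : Sites a b) :
    B x ↔ P (s q) := by
  have hconn := hA.iff_of_configWeight_ne_zero hw
  have hsite := hA.siteVirtual_iff hw
  rcases hx with ((⟨j, rfl⟩ | ⟨j, rfl⟩) | ⟨i, rfl⟩) | ⟨i, rfl⟩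
  · rw [← siteVirtual_up_zero C eH eV ha j]
    exact (hsite _).1.trans (hconn _ q)
  · rw [← siteVirtual_down_last C eH eV ha j]
    exact (hsite _).2.1.trans (hconn _ q)
  · rw [← siteVirtual_left_zero C eH eV hb i]
    exact (hsite _).2.2.1.trans (hconn _ q)
  · rw [← siteVirtual_right_last C eH eV hb i]
    exact (hsite _).2.2.2.trans (hconn _ q)

lemma chi_eq_zero (hA : A.RespectsBlocks P B) (ha : 0 < a) (hb : 0 < b) {x : Fin D}
    (hx : x ∈ C.legs) (hBx : B x) {q : Sites a b} (hq : ¬ P (s q)) : chi A a b s C = 0 :=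
  Finset.sum_eq_zero fun _ _ => Finset.sum_eq_zero fun _ _ =>
    by_contra fun hw => hq ((hA.legs_iff hw ha hb hx q).1 hBx)

lemma chi_eq_zero_of_mixed (hA : A.RespectsBlocks P B) (ha : 0 < a) (hb : 0 < b) {x y : Fin D}
    (hx : x ∈ C.legs) (hy : y ∈ C.legs) (hBx : B x) (hBy : ¬ B y) : chi A a b s C = 0 := by
  by_cases hp : P (s (⟨0, ha⟩, ⟨0, hb⟩))
  · exact hA.compl.chi_eq_zero ha hb hy hBy (not_not.2 hp)
  · exact hA.chi_eq_zero ha hb hx hBx hp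

/-- In a nonzero configuration every bond lies in the block of the adjacent physical index, so
only bonds in the range of `φ` contribute. -/
lemma chi_comp_map (hA : A.RespectsBlocks P B) {d₀ D₀ : ℕ} {A₀ : PEPSTensor d₀ D₀}
    {ψ : Fin d₀ → Fin d} {φ : Fin D₀ → Fin D} (hφ : Injective φ) (hψ : ∀ x, P (ψ x))
    (hB : ∀ u, B u → u ∈ Set.range φ)
    (hA₀ : ∀ x u dn l r, A (ψ x) (φ u) (φ dn) (φ l) (φ r) = A₀ x u dn l r)
    (s : Sites a b → Fin d₀) (C : BIdx D₀ a b) :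
    chi A a b (ψ ∘ s) (C.map φ) = chi A₀ a b s C := by
  rw [chi_apply, chi_apply, ← Fintype.sum_prod_type', ← Fintype.sum_prod_type']
  symm
  refine Fintype.sum_of_injective (fun e => (φ ∘ e.1, φ ∘ e.2))
    (hφ.comp_left.prodMap hφ.comp_left) _ _ ?_ fun e => ?_
  · rintro ⟨eH, eV⟩ hnot
    by_contra hw
    have hsite := hA.siteVirtual_iff hw
    have hH : ∀ x, eH x ∈ Set.range φ := fun x => hB _ <| by
      have := (hsite (x.1, ⟨x.2, by omega⟩)).2.2.2
      rw [siteVirtual_right _ eH eV x.1 x.2 (by omega)] at this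
      exact this.2 (hψ _)
    have hV : ∀ x, eV x ∈ Set.range φ := fun x => hB _ <| by
      have := (hsite (⟨x.1, by omega⟩, x.2)).2.1
      rw [siteVirtual_down _ eH eV x.1 (by omega)] at this
      exact this.2 (hψ _)
    obtain ⟨eH₀, rfl⟩ := Set.range_subset_range_iff_exists_comp.1 (Set.range_subset_iff.2 hH)
    obtain ⟨eV₀, rfl⟩ := Set.range_subset_range_iff_exists_comp.1 (Set.range_subset_iff.2 hV)
    exact hnot ⟨(eH₀, eV₀), rfl⟩
  · simp only [configWeight, siteVirtual_map, comp_apply, hA₀]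

end RespectsBlocks

def kron {d₂ D₂ d₃ D₃ : ℕ} (A₂ : PEPSTensor d₂ D₂) (A₃ : PEPSTensor d₃ D₃) :
    PEPSTensor (d₂ * d₃) (D₂ * D₃) := fun x u dn l r =>
  A₂ (finProdFinEquiv.symm x).1 (finProdFinEquiv.symm u).1 (finProdFinEquiv.symm dn).1
      (finProdFinEquiv.symm l).1 (finProdFinEquiv.symm r).1 *
    A₃ (finProdFinEquiv.symm x).2 (finProdFinEquiv.symm u).2 (finProdFinEquiv.symm dn).2
      (finProdFinEquiv.symm l).2 (finProdFinEquiv.symm r).2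

end PEPSTensor

lemma Fintype.sum_fun_finProd {X M : Type*} [Fintype X] [DecidableEq X] [AddCommMonoid M]
    {m n : ℕ} (f : (X → Fin (m * n)) → M) :
    ∑ y, f y = ∑ u : X → Fin m, ∑ v : X → Fin n, f fun x => finProdFinEquiv (u x, v x) := by
  rw [← Fintype.sum_prod_type']
  exact (Fintype.sum_equiv
    ((Equiv.arrowProdEquivProdArrow X (fun _ => Fin m) fun _ => Fin n).symm.trans
      (Equiv.arrowCongr (Equiv.refl X) finProdFinEquiv)) _ _ fun _ => rfl).symm

lemma chi_kron {d₂ D₂ d₃ D₃ a b : ℕ} (A₂ : PEPSTensor d₂ D₂) (A₃ : PEPSTensor d₃ D₃)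
    (t : Sites a b → Fin d₂ × Fin d₃) (C₂ : BIdx D₂ a b) (C₃ : BIdx D₃ a b) :
    chi (A₂.kron A₃) a b (finProdFinEquiv ∘ t) (C₂.zip C₃) =
      chi A₂ a b (Prod.fst ∘ t) C₂ * chi A₃ a b (Prod.snd ∘ t) C₃ := by
  have hw : ∀ eH₂ eV₂ eH₃ eV₃, configWeight (A₂.kron A₃) (finProdFinEquiv ∘ t) (C₂.zip C₃)
      (fun x => finProdFinEquiv (eH₂ x, eH₃ x)) (fun x => finProdFinEquiv (eV₂ x, eV₃ x)) =
      configWeight A₂ (Prod.fst ∘ t) C₂ eH₂ eV₂ * configWeight A₃ (Prod.snd ∘ t) C₃ eH₃ eV₃ := by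
    intro eH₂ eV₂ eH₃ eV₃
    simp only [configWeight, ← Finset.prod_mul_distrib, siteVirtual_zip, PEPSTensor.kron,
      comp_apply, Equiv.symm_apply_apply]
  simp only [chi_apply, Fintype.sum_fun_finProd, hw, Finset.sum_mul_sum]

def embeddingMatrix (R X : Type*) [Semiring R] [Fintype X] {α β : Type*} [DecidableEq β]
    (f : α → β) : Matrix (X → β) (X → α) R :=
  Matrix.of fun s' s => if s' = f ∘ s then 1 else 0

lemma embeddingMatrix_mulVec_eq {R X α β : Type*} [Semiring R] [Fintype X] [DecidableEq X]
    [Fintype α] [DecidableEq β] {f : α → β} (hf : Injective f) {v : (X → α) → R}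
    {w : (X → β) → R} (hv : ∀ s, w (f ∘ s) = v s)
    (hw : ∀ s', s' ∉ Set.range (f ∘ ·) → w s' = 0) :
    embeddingMatrix R X f *ᵥ v = w := by
  funext s'
  simp only [Matrix.mulVec, dotProduct, embeddingMatrix, Matrix.of_apply, ite_mul, one_mul,
    zero_mul]
  by_cases hs' : s' ∈ Set.range (f ∘ ·)
  · obtain ⟨s, rfl⟩ := hs'
    rw [hv, Finset.sum_eq_single s (fun s₁ _ hne => if_neg fun h => hne (hf.comp_left h).symm)
      (by simp), if_pos rfl]
  · rw [hw s' hs']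
    exact Finset.sum_eq_zero fun s _ => if_neg fun h => hs' ⟨s, h.symm⟩

def tensorMul (R X α β : Type*) [CommSemiring R] :
    ((X → α) → R) →ₗ[R] ((X → β) → R) →ₗ[R] (X → α × β) → R :=
  LinearMap.mk₂ R (fun g h s => g (Prod.fst ∘ s) * h (Prod.snd ∘ s))
    (fun _ _ _ => by ext; simp [add_mul]) (fun _ _ _ => by ext; simp [mul_assoc])
    (fun _ _ _ => by ext; simp [mul_add]) (fun _ _ _ => by ext; simp [mul_left_comm])

lemma subspaceTensor_eq_map₂ {d2 d3 a b : ℕ} (S : Submodule ℂ ((Sites a b → Fin d2) → ℂ))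
    (T : Submodule ℂ ((Sites a b → Fin d3) → ℂ)) :
    subspaceTensor S T = Submodule.map₂ (tensorMul ℂ _ _ _) S T := by
  rw [Submodule.map₂_eq_span_image2, subspaceTensor]
  congr 1
  ext f
  exact ⟨fun ⟨g, hg, h, hh, e⟩ => ⟨g, hg, h, hh, e.symm⟩,
    fun ⟨g, hg, h, hh, e⟩ => ⟨g, hg, h, hh, e.symm⟩⟩

lemma iota1_eq (d1 d2 d3 a b : ℕ) :
    iota1 d1 d2 d3 a b = embeddingMatrix ℂ (Sites a b) (Fin.castAdd (d2 * d3)) := by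
  ext s' s
  simp [iota1, embeddingMatrix, funext_iff, Fin.ext_iff]

lemma iota2_eq (d1 d2 d3 a b : ℕ) :
    iota2 d1 d2 d3 a b = embeddingMatrix ℂ (Sites a b) (Fin.natAdd d1 ∘ finProdFinEquiv) := by
  ext s' s
  simp [iota2, embeddingMatrix, funext_iff, Fin.ext_iff]

section composed

variable {d1 D1 d2 D2 d3 D3 : ℕ} (AG : PEPSTensor d1 D1) (AZ : PEPSTensor d2 D2)
  (AT : PEPSTensor d3 D3)

lemma composed_respectsBlocks :
    (composed AG AZ AT).RespectsBlocks (fun x => (x : ℕ) < d1) (fun u => (u : ℕ) < D1) := by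
  intro x u dn l r h
  simp only [composed] at h
  split_ifs at h <;> first | exact absurd rfl h | refine ⟨?_, ?_, ?_, ?_⟩ <;> omega

lemma composed_castAdd (x : Fin d1) (u dn l r : Fin D1) :
    composed AG AZ AT (Fin.castAdd _ x) (Fin.castAdd _ u) (Fin.castAdd _ dn) (Fin.castAdd _ l)
      (Fin.castAdd _ r) = AG x u dn l r := by
  simp [composed]

lemma splitIdx_natAdd {m p q : ℕ} (x : Fin (p * q)) (h : m ≤ (Fin.natAdd m x : ℕ)) :
    splitIdx (Fin.natAdd m x) h = finProdFinEquiv.symm x := by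
  simp [splitIdx]

lemma composed_natAdd (x : Fin (d2 * d3)) (u dn l r : Fin (D2 * D3)) :
    composed AG AZ AT (Fin.natAdd d1 x) (Fin.natAdd D1 u) (Fin.natAdd D1 dn) (Fin.natAdd D1 l)
      (Fin.natAdd D1 r) = AZ.kron AT x u dn l r := by
  simp [composed, splitIdx_natAdd, PEPSTensor.kron]

lemma col_chi_composed_map_castAdd {a b : ℕ} (C : BIdx D1 a b) :
    (chi (composed AG AZ AT) a b).col (C.map (Fin.castAdd _)) =
      iota1 d1 d2 d3 a b *ᵥ (chi AG a b).col C := by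
  rw [iota1_eq]
  refine (embeddingMatrix_mulVec_eq (Fin.castAdd_injective _ _) (fun s => ?_) fun s hs => ?_).symm
  · exact (composed_respectsBlocks AG AZ AT).chi_comp_map (Fin.castAdd_injective _ _)
      (fun x => x.isLt) (fun u hu => ⟨⟨u, hu⟩, rfl⟩) (composed_castAdd AG AZ AT) s C
  · obtain ⟨p, hp⟩ : ∃ p, ¬ (s p : ℕ) < d1 := by
      by_contra! h
      exact hs ⟨fun p => ⟨s p, h p⟩, rfl⟩
    have hb := p.2.pos
    exact (composed_respectsBlocks AG AZ AT).chi_eq_zero p.1.pos hb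
      (Or.inl (Or.inl (Or.inl ⟨⟨0, hb⟩, rfl⟩))) (C.1 ⟨0, hb⟩).isLt hp

lemma col_chi_composed_map_natAdd_zip {a b : ℕ} (C₂ : BIdx D2 a b) (C₃ : BIdx D3 a b) :
    (chi (composed AG AZ AT) a b).col ((C₂.zip C₃).map (Fin.natAdd D1)) =
      iota2 d1 d2 d3 a b *ᵥ tensorMul ℂ _ _ _ ((chi AZ a b).col C₂) ((chi AT a b).col C₃) := by
  rw [iota2_eq]
  refine (embeddingMatrix_mulVec_eq ((Fin.natAdd_injective _ _).comp finProdFinEquiv.injective)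
    (fun t => ?_) fun s hs => ?_).symm
  · refine ((composed_respectsBlocks AG AZ AT).compl.chi_comp_map (Fin.natAdd_injective _ _)
      (fun x => by simp)
      (fun u hu => ⟨⟨u - D1, by omega⟩, Fin.ext (by simp only [Fin.val_natAdd]; omega)⟩)
      (composed_natAdd AG AZ AT) _ _).trans ?_
    exact chi_kron AZ AT t C₂ C₃
  · obtain ⟨p, hp⟩ : ∃ p, (s p : ℕ) < d1 := by
      by_contra! h
      refine hs ⟨fun p => finProdFinEquiv.symm ⟨s p - d1, by have := h p; omega⟩,
        funext fun p => Fin.ext ?_⟩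
      simp only [comp_apply, Equiv.apply_symm_apply, Fin.val_natAdd]
      have := h p
      omega
    have hb := p.2.pos
    exact (composed_respectsBlocks AG AZ AT).compl.chi_eq_zero p.1.pos hb
      (Or.inl (Or.inl (Or.inl ⟨⟨0, hb⟩, rfl⟩))) (by simp [BIdx.map]) (not_not.2 hp)

/-- Columns with mixed boundary vanish, except for an empty region, where all columns agree. -/
lemma col_chi_composed_cases {a b : ℕ} (C : BIdx (D1 + D2 * D3) a b) :
    (chi (composed AG AZ AT) a b).col C = 0 ∨
      (∃ C₁ : BIdx D1 a b, (chi (composed AG AZ AT) a b).col C =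
        (chi (composed AG AZ AT) a b).col (C₁.map (Fin.castAdd _))) ∨
      ∃ (C₂ : BIdx D2 a b) (C₃ : BIdx D3 a b), (chi (composed AG AZ AT) a b).col C =
        (chi (composed AG AZ AT) a b).col ((C₂.zip C₃).map (Fin.natAdd D1)) := by
  by_cases h₁ : ∀ x ∈ C.legs, (x : ℕ) < D1
  · obtain ⟨C₁, rfl⟩ :=
      BIdx.exists_map_eq (φ := Fin.castAdd (D2 * D3)) fun x hx => ⟨⟨x, h₁ x hx⟩, rfl⟩
    exact Or.inr (Or.inl ⟨C₁, rfl⟩)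
  by_cases h₂ : ∀ x ∈ C.legs, ¬ (x : ℕ) < D1
  · obtain ⟨C₂₃, rfl⟩ := BIdx.exists_map_eq (φ := Fin.natAdd D1) fun x hx =>
      have := h₂ x hx
      ⟨⟨x - D1, by omega⟩, Fin.ext (by simp only [Fin.val_natAdd]; omega)⟩
    obtain ⟨C₂, C₃, rfl⟩ := C₂₃.exists_zip_eq
    exact Or.inr (Or.inr ⟨C₂, C₃, rfl⟩)
  push Not at h₁ h₂
  obtain ⟨x, hx, hBx⟩ := h₁
  obtain ⟨y, hy, hBy⟩ := h₂
  by_cases hab : 0 < a ∧ 0 < b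
  · exact Or.inl <| funext fun s => (composed_respectsBlocks AG AZ AT).chi_eq_zero_of_mixed
      hab.1 hab.2 hy hx hBy (not_lt.2 hBx)
  · have hempty : a = 0 ∨ b = 0 := by omega
    let y₁ : Fin D1 := ⟨y, hBy⟩
    refine Or.inr (Or.inl ⟨(fun _ => y₁, fun _ => y₁, fun _ => y₁, fun _ => y₁),
      funext fun s => ?_⟩)
    rw [Matrix.col_apply, Matrix.col_apply, chi_eq_one _ hempty, chi_eq_one _ hempty]

end composed

/-- For the composed tensor `A = A_G ⊕ (A_Z ⊗ A_T)` and every rectangular `a × b` region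
`R`, the range of the boundary map satisfies
`range χ(A,R) = ι₁(range χ(A_G,R)) ⊕ ι₂(range χ(A_Z,R) ⊗ range χ(A_T,R))`. -/
theorem range_chi_composed {d1 D1 d2 D2 d3 D3 : ℕ} (AG : PEPSTensor d1 D1)
    (AZ : PEPSTensor d2 D2) (AT : PEPSTensor d3 D3) (a b : ℕ) :
    LinearMap.range (chi (composed AG AZ AT) a b).mulVecLin =
      Submodule.map (iota1 d1 d2 d3 a b).mulVecLin
        (LinearMap.range (chi AG a b).mulVecLin) ⊔
      Submodule.map (iota2 d1 d2 d3 a b).mulVecLin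
        (subspaceTensor (LinearMap.range (chi AZ a b).mulVecLin)
          (LinearMap.range (chi AT a b).mulVecLin)) := by
  simp only [Matrix.range_mulVecLin, subspaceTensor_eq_map₂, Submodule.map₂_span_span,
    Submodule.map_span, ← Submodule.span_union]
  refine le_antisymm (Submodule.span_le.2 ?_) (Submodule.span_le.2 ?_)
  · rintro _ ⟨C, rfl⟩
    rcases col_chi_composed_cases AG AZ AT C with h | ⟨C₁, h⟩ | ⟨C₂, C₃, h⟩
    · rw [SetLike.mem_coe, h]
      exact zero_mem _
    · rw [h, col_chi_composed_map_castAdd]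
      exact Submodule.subset_span (Or.inl ⟨_, ⟨C₁, rfl⟩, rfl⟩)
    · rw [h, col_chi_composed_map_natAdd_zip]
      exact Submodule.subset_span (Or.inr ⟨_, ⟨_, ⟨C₂, rfl⟩, _, ⟨C₃, rfl⟩, rfl⟩, rfl⟩)
  · rintro _ (⟨_, ⟨C₁, rfl⟩, rfl⟩ | ⟨_, ⟨_, ⟨C₂, rfl⟩, _, ⟨C₃, rfl⟩, rfl⟩, rfl⟩)
    · exact Submodule.subset_span ⟨_, col_chi_composed_map_castAdd AG AZ AT C₁⟩
    · exact Submodule.subset_span ⟨_, col_chi_composed_map_natAdd_zip AG AZ AT C₂ C₃⟩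
end
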